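/- arXiv:2201.02384 — 4 statements merged into one kernel-verified Lean document; each statement's English description precedes it below -/
import Mathlib

section
/- Lower bound on the nonlocal energy: let n ≥ 2, ε > 0, ρ > 0, η > 0, and let u : ℝⁿ → {0,1} be measurable with ∫_{ℝⁿ} u = 1 and supp u ⊂ ℝ × B′_ρ(0), where B′_ρ(0) is the ball of radius ρ in ℝ^{n−1}. Set A := 𝔸[u] and, for ξ₁ ∈ ℝ, D′_η(ξ₁) := { ξ′ ∈ ℝ^{n−1} : |ξ′| ≤ η |Â(ξ₁)|^{1/2} }. Then N_ε^(n)[u] ≥ (1 − ρ²η²) N_{ε,η,1}[u] + N_{ε,η,2}[u], where N_{ε,η,1}[u] := (γ_n(ε)/(2π)^{n−1}) ∫_{ℝⁿ} ξ₁²/(ε²ξ₁² + |ξ′|²) |Â(ξ₁)|² χ_{D′_η(ξ₁)}(ξ′) dξ and N_{ε,η,2}[u] := γ_n(ε) ∫_{ℝⁿ} ξ₁²/(ε²ξ₁² + |ξ′|²) |û(ξ) − (2π)^{−(n−1)/2} Â(ξ₁) χ_{D′_η(ξ₁)}(ξ′)|² dξ. -/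
open MeasureTheory Real Filter Topology ENNReal

noncomputable section

/-- ℝⁿ modelled as ℝ × ℝ^{n-1} with n = m+1: points x = (x₁, x′). -/
abbrev Spc (m : ℕ) := ℝ × EuclideanSpace ℝ (Fin m)

/-- Fourier transform on ℝⁿ (n = m+1) with the convention
    û(ξ) = (2π)^{-n/2} ∫ u(x) e^{-i x·ξ} dx. -/
def ft {m : ℕ} (u : Spc m → ℝ) (ξ : Spc m) : ℂ :=
  (((2 * π) ^ (-((m : ℝ) + 1) / 2) : ℝ) : ℂ) *
    ∫ x : Spc m, (u x : ℂ) * Complex.exp (-(Complex.I * ((x.1 * ξ.1 + @inner ℝ _ _ x.2 ξ.2 : ℝ) : ℂ)))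

/-- One-dimensional Fourier transform f̂(ξ₁) = (2π)^{-1/2} ∫ f(x₁) e^{-i x₁ ξ₁} dx₁. -/
def ft1 (f : ℝ → ℝ) (ξ : ℝ) : ℂ :=
  (((2 * π) ^ (-(1:ℝ)/2) : ℝ) : ℂ) * ∫ x : ℝ, (f x : ℂ) * Complex.exp (-(Complex.I * ((x * ξ : ℝ) : ℂ)))

/-- The prefactor γ_n(ε). -/
def gam (n : ℕ) (ε : ℝ) : ℝ := if n = 2 then ε else if n = 3 then 1 / (7 * |Real.log ε|) else 1

/-- The nonlocal energy N_ε^{(n)}[u], n = m+1, valued in [0,∞]. -/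
def Nen (m : ℕ) (ε : ℝ) (u : Spc m → ℝ) : ℝ≥0∞ :=
  ∫⁻ ξ : Spc m, ENNReal.ofReal (gam (m+1) ε * (ξ.1^2 / (ε^2 * ξ.1^2 + ‖ξ.2‖^2)) * ‖ft u ξ‖^2)

/-- Divergence of a vector field as the trace of its derivative. -/
def divg {m : ℕ} (φ : Spc m → Spc m) (x : Spc m) : ℝ :=
  LinearMap.trace ℝ (Spc m) (fderiv ℝ φ x : Spc m →ₗ[ℝ] Spc m)

/-- The anisotropic perimeter P_ε^{(n)}[u], as a supremum over C¹ compactly supported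
    vector fields φ with ε⁻²φ₁² + |φ′|² ≤ 1. -/
def Per (m : ℕ) (ε : ℝ) (u : Spc m → ℝ) : ℝ≥0∞ :=
  ⨆ (φ : Spc m → Spc m) (_ : ContDiff ℝ 1 φ ∧ HasCompactSupport φ ∧
      ∀ x, ε⁻¹ ^ 2 * (φ x).1 ^ 2 + ‖(φ x).2‖ ^ 2 ≤ 1),
    ENNReal.ofReal (∫ x : Spc m, u x * divg φ x)

/-- The rescaled energy E_ε^{(n)} = P_ε^{(n)} + N_ε^{(n)}. -/
def En (m : ℕ) (ε : ℝ) (u : Spc m → ℝ) : ℝ≥0∞ := Per m ε u + Nen m ε u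

/-- The admissible class 𝒜: measurable {0,1}-valued functions of unit mass and finite perimeter. -/
def Adm (m : ℕ) : Set (Spc m → ℝ) :=
  {u | Measurable u ∧ (∀ x, u x = 0 ∨ u x = 1) ∧ (∫ x : Spc m, u x) = 1 ∧ Per m 1 u < ⊤}

/-- The cross-sectional area 𝔸[u](x₁) = ∫ u(x₁, x′) dx′. -/
def crossA {m : ℕ} (u : Spc m → ℝ) (x₁ : ℝ) : ℝ := ∫ x' : EuclideanSpace ℝ (Fin m), u (x₁, x')

/-- Squared H^s(ℝ) norm, ‖f‖²_{H^s} = ∫ (1+ξ²)^s |f̂(ξ)|² dξ, valued in [0,∞]. -/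
def HsN (s : ℝ) (f : ℝ → ℝ) : ℝ≥0∞ :=
  ∫⁻ ξ : ℝ, ENNReal.ofReal ((1 + ξ^2) ^ s * ‖ft1 f ξ‖^2)

/-- Membership in H^s(ℝ): f ∈ L² with finite H^s norm. -/
def MemHs (s : ℝ) (f : ℝ → ℝ) : Prop := MemLp f 2 volume ∧ HsN s f < ⊤

/-- Indicator of the low-frequency cone D′_η(ξ₁) = {ξ′ : |ξ′| ≤ η |Â(ξ₁)|^{1/2}}. -/
def Dind (m : ℕ) (η : ℝ) (A : ℝ → ℝ) (ξ : Spc m) : ℝ :=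
  if ‖ξ.2‖ ≤ η * Real.sqrt ‖ft1 A ξ.1‖ then 1 else 0

/-- The part N_{ε,η,1}[u] of the nonlocal energy carried by the cross-section. -/
def N1 (m : ℕ) (ε η : ℝ) (u : Spc m → ℝ) : ℝ≥0∞ :=
  ∫⁻ ξ : Spc m, ENNReal.ofReal (gam (m+1) ε / (2*π)^m *
    (ξ.1^2 / (ε^2 * ξ.1^2 + ‖ξ.2‖^2)) *
    (‖ft1 (crossA u) ξ.1‖^2 * Dind m η (crossA u) ξ))

/-- The remainder part N_{ε,η,2}[u] of the nonlocal energy. -/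
def N2 (m : ℕ) (ε η : ℝ) (u : Spc m → ℝ) : ℝ≥0∞ :=
  ∫⁻ ξ : Spc m, ENNReal.ofReal (gam (m+1) ε *
    (ξ.1^2 / (ε^2 * ξ.1^2 + ‖ξ.2‖^2)) *
    ‖ft u ξ - (((2*π) ^ (-(m:ℝ)/2) : ℝ) : ℂ) * ft1 (crossA u) ξ.1 * (Dind m η (crossA u) ξ : ℂ)‖^2)

open scoped InnerProductSpace

/-!
Write `c(ξ₁) := (2π)^{-(n-1)/2} Â(ξ₁)`; by Fubini this is `û(ξ₁, 0)`. Since `u` has unit mass and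
lives in `|x′| < ρ`, the bound `2 - 2 cos t ≤ t²` controls the second difference
`2 û(ξ₁, 0) - û(ξ₁, ξ′) - û(ξ₁, -ξ′)` by `(2π)^{-n/2} ρ² |ξ′|²`, hence on `D′_η(ξ₁)` it gives
`|2c - a - a′| |c| ≤ ρ²η² |c|²` with `a = û(ξ₁, ξ′)`, `a′ = û(ξ₁, -ξ′)`. Combined with
`|a - c|² + |a′ - c|² + 2|c|² = |a|² + |a′|² + 2⟪2c - a - a′, c⟫`, this bounds the integrands of
`N_{ε,η,1} + N_{ε,η,2}` at `ξ` and at `(ξ₁, -ξ′)` together by those of `N_ε + ρ²η² N_{ε,η,1}`;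
the reflection `ξ′ ↦ -ξ′` preserves Lebesgue measure, so the inequality integrates.
-/

theorem lintegral_ofReal_le_of_add_comp_le {α : Type*} [MeasurableSpace α] {μ : Measure α}
    (T : α ≃ᵐ α) (hT : MeasurePreserving T μ μ) {f g : α → ℝ} (hf : 0 ≤ f)
    (hg : Measurable g) (h : ∀ x, f x + f (T x) ≤ g x + g (T x)) :
    ∫⁻ x, ENNReal.ofReal (f x) ∂μ ≤ ∫⁻ x, ENNReal.ofReal (g x) ∂μ := by
  have hcomp (φ : α → ℝ≥0∞) : ∫⁻ x, φ (T x) ∂μ = ∫⁻ x, φ x ∂μ :=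
    hT.lintegral_comp_emb T.measurableEmbedding φ
  have hdouble : 2 * ∫⁻ x, ENNReal.ofReal (f x) ∂μ ≤ 2 * ∫⁻ x, ENNReal.ofReal (g x) ∂μ :=
    calc 2 * ∫⁻ x, ENNReal.ofReal (f x) ∂μ
        = ∫⁻ x, ENNReal.ofReal (f x) ∂μ + ∫⁻ x, ENNReal.ofReal (f (T x)) ∂μ := by
          rw [hcomp (fun x => ENNReal.ofReal (f x)), two_mul]
      _ ≤ ∫⁻ x, ENNReal.ofReal (f x + f (T x)) ∂μ := by
          simp only [ENNReal.ofReal_add (hf _) (hf _)]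
          exact le_lintegral_add _ _
      _ ≤ ∫⁻ x, (ENNReal.ofReal (g x) + ENNReal.ofReal (g (T x))) ∂μ :=
          lintegral_mono fun x => (ENNReal.ofReal_le_ofReal (h x)).trans ENNReal.ofReal_add_le
      _ = 2 * ∫⁻ x, ENNReal.ofReal (g x) ∂μ := by
          rw [lintegral_add_left hg.ennreal_ofReal, hcomp (fun x => ENNReal.ofReal (g x)), two_mul]
  exact (ENNReal.mul_le_mul_iff_right two_ne_zero ofNat_ne_top).mp hdouble

theorem norm_sq_add_norm_sub_sq_add_norm_sub_sq_le {E : Type*} [NormedAddCommGroup E]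
    [InnerProductSpace ℝ E] (a a' c : E) :
    2 * ‖c‖ ^ 2 + ‖a - c‖ ^ 2 + ‖a' - c‖ ^ 2
      ≤ ‖a‖ ^ 2 + ‖a'‖ ^ 2 + 2 * (‖(2 : ℝ) • c - a - a'‖ * ‖c‖) := by
  have hinner : ⟪(2 : ℝ) • c - a - a', c⟫_ℝ = 2 * ‖c‖ ^ 2 - ⟪a, c⟫_ℝ - ⟪a', c⟫_ℝ := by
    rw [inner_sub_left, inner_sub_left, real_inner_smul_left, real_inner_self_eq_norm_sq]
  rw [norm_sub_sq_real, norm_sub_sq_real]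
  linarith [real_inner_le_norm ((2 : ℝ) • c - a - a') c]

theorem cexp_neg_I_mul_add_add_sub (s t : ℝ) :
    Complex.exp (-(Complex.I * ((s + t : ℝ) : ℂ))) + Complex.exp (-(Complex.I * ((s - t : ℝ) : ℂ)))
      = Complex.exp (-(Complex.I * (s : ℂ))) * ((2 * Real.cos t : ℝ) : ℂ) := by
  push_cast
  rw [Complex.cos, show -(Complex.I * (s + t)) = -(Complex.I * s) + -t * Complex.I by ring,
    show -(Complex.I * (s - t)) = -(Complex.I * s) + t * Complex.I by ring,
    Complex.exp_add, Complex.exp_add]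
  ring

theorem norm_cexp_neg_I_mul (r : ℝ) : ‖Complex.exp (-(Complex.I * (r : ℂ)))‖ = 1 := by
  simp [Complex.norm_exp]

theorem split_energy_pair_le (a a' c : ℂ) {d κ : ℝ} (hd : d = 0 ∨ d = 1)
    (h : d = 1 → ‖2 * c - a - a'‖ * ‖c‖ ≤ κ * ‖c‖ ^ 2) :
    ‖c‖ ^ 2 * d + ‖a - c * d‖ ^ 2 + (‖c‖ ^ 2 * d + ‖a' - c * d‖ ^ 2)
      ≤ ‖a‖ ^ 2 + κ * (‖c‖ ^ 2 * d) + (‖a'‖ ^ 2 + κ * (‖c‖ ^ 2 * d)) := by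
  rcases hd with rfl | rfl
  · simp
  have hsmul : (2 : ℝ) • c = 2 * c := by simp [Complex.real_smul]
  have := norm_sq_add_norm_sub_sq_add_norm_sub_sq_le a a' c
  rw [hsmul] at this
  simp only [Complex.ofReal_one, mul_one]
  linarith [h rfl]

theorem integrable_ofReal_mul_cexp {α : Type*} [MeasurableSpace α] {μ : Measure α} {u : α → ℝ}
    (hu : Integrable u μ) {φ : α → ℝ} (hφ : Measurable φ) :
    Integrable (fun x => (u x : ℂ) * Complex.exp (-(Complex.I * (φ x : ℂ)))) μ :=
  hu.ofReal.mul_bdd (by fun_prop) (ae_of_all _ fun x => (norm_cexp_neg_I_mul (φ x)).le)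

def reflectSnd (m : ℕ) : Spc m ≃ᵐ Spc m :=
  (MeasurableEquiv.refl ℝ).prodCongr (MeasurableEquiv.neg (EuclideanSpace ℝ (Fin m)))

@[simp]
theorem reflectSnd_apply {m : ℕ} (ξ : Spc m) : reflectSnd m ξ = (ξ.1, -ξ.2) := rfl

theorem measurePreserving_reflectSnd (m : ℕ) :
    MeasurePreserving (reflectSnd m) volume volume :=
  (MeasurePreserving.id volume).prod (Measure.measurePreserving_neg volume)

section Fourier

variable {m : ℕ}

theorem measurable_crossA {u : Spc m → ℝ} (hu : Measurable u) : Measurable (crossA u) :=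
  hu.stronglyMeasurable.integral_prod_right'.measurable

theorem measurable_ft {u : Spc m → ℝ} (hu : Measurable u) : Measurable (ft u) := by
  have hkernel : Measurable fun p : Spc m × Spc m => (u p.1 : ℂ) *
      Complex.exp (-(Complex.I * ((p.1.1 * p.2.1 + ⟪p.1.2, p.2.2⟫_ℝ : ℝ) : ℂ))) := by
    fun_prop
  exact hkernel.stronglyMeasurable.integral_prod_left'.measurable.const_mul _

theorem measurable_ft1 {f : ℝ → ℝ} (hf : Measurable f) : Measurable (ft1 f) := by
  have hkernel : Measurable fun p : ℝ × ℝ =>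
      (f p.1 : ℂ) * Complex.exp (-(Complex.I * ((p.1 * p.2 : ℝ) : ℂ))) := by
    fun_prop
  exact hkernel.stronglyMeasurable.integral_prod_left'.measurable.const_mul _

theorem measurable_Dind (η : ℝ) {A : ℝ → ℝ} (hA : Measurable A) : Measurable (Dind m η A) :=
  Measurable.ite (measurableSet_le (by fun_prop)
    (((measurable_ft1 hA).comp measurable_fst).norm.sqrt.const_mul η)) measurable_const
    measurable_const

theorem ft_fst_zero {u : Spc m → ℝ} (hu : Integrable u) (ξ₁ : ℝ) :
    ft u (ξ₁, 0) = (((2 * π) ^ (-(m : ℝ) / 2) : ℝ) : ℂ) * ft1 (crossA u) ξ₁ := by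
  have hfubini : ∫ x : Spc m, (u x : ℂ) * Complex.exp (-(Complex.I * ((x.1 * ξ₁ : ℝ) : ℂ)))
      = ∫ x₁ : ℝ, (crossA u x₁ : ℂ) * Complex.exp (-(Complex.I * ((x₁ * ξ₁ : ℝ) : ℂ))) := by
    rw [Measure.volume_eq_prod, integral_prod _
      (integrable_ofReal_mul_cexp hu (by fun_prop : Measurable fun x : Spc m => x.1 * ξ₁))]
    simp only [integral_mul_const, crossA, integral_complex_ofReal]
  have hconst : (2 * π : ℝ) ^ (-((m : ℝ) + 1) / 2)
      = (2 * π) ^ (-(m : ℝ) / 2) * (2 * π) ^ (-(1 : ℝ) / 2) := by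
    rw [← Real.rpow_add (by positivity)]
    ring_nf
  simp only [ft, inner_zero_right, add_zero]
  rw [hfubini, ft1, hconst, Complex.ofReal_mul]
  ring

theorem second_diff_ft_eq {u : Spc m → ℝ} (hu : Integrable u) (ξ₁ : ℝ)
    (ξ' : EuclideanSpace ℝ (Fin m)) :
    2 * ft u (ξ₁, 0) - ft u (ξ₁, ξ') - ft u (ξ₁, -ξ')
      = (((2 * π) ^ (-((m : ℝ) + 1) / 2) : ℝ) : ℂ) * ∫ x : Spc m, (u x : ℂ) *
          Complex.exp (-(Complex.I * ((x.1 * ξ₁ : ℝ) : ℂ))) *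
            ((2 - 2 * Real.cos ⟪x.2, ξ'⟫_ℝ : ℝ) : ℂ) := by
  have hint (ζ : EuclideanSpace ℝ (Fin m)) := integrable_ofReal_mul_cexp hu
    (by fun_prop : Measurable fun x : Spc m => x.1 * ξ₁ + ⟪x.2, ζ⟫_ℝ)
  have hpoint (x : Spc m) : (u x : ℂ) * Complex.exp (-(Complex.I * ((x.1 * ξ₁ : ℝ) : ℂ)))
      * ((2 - 2 * Real.cos ⟪x.2, ξ'⟫_ℝ : ℝ) : ℂ)
      = 2 * ((u x : ℂ) * Complex.exp (-(Complex.I * ((x.1 * ξ₁ + ⟪x.2, 0⟫_ℝ : ℝ) : ℂ))))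
        - (u x : ℂ) * Complex.exp (-(Complex.I * ((x.1 * ξ₁ + ⟪x.2, ξ'⟫_ℝ : ℝ) : ℂ)))
        - (u x : ℂ) * Complex.exp (-(Complex.I * ((x.1 * ξ₁ + ⟪x.2, -ξ'⟫_ℝ : ℝ) : ℂ))) := by
    have hsum := cexp_neg_I_mul_add_add_sub (x.1 * ξ₁) ⟪x.2, ξ'⟫_ℝ
    have hcast : ((2 - 2 * Real.cos ⟪x.2, ξ'⟫_ℝ : ℝ) : ℂ)
        = 2 - ((2 * Real.cos ⟪x.2, ξ'⟫_ℝ : ℝ) : ℂ) := by push_cast; ring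
    rw [inner_zero_right, add_zero, inner_neg_right, ← sub_eq_add_neg, hcast]
    linear_combination (u x : ℂ) * hsum
  simp only [hpoint]
  rw [integral_sub, integral_sub, integral_const_mul]
  · simp only [ft]
    ring
  exacts [(hint 0).const_mul 2, hint ξ', ((hint 0).const_mul 2).sub (hint ξ'), hint (-ξ')]

theorem norm_second_diff_ft_le {u : Spc m → ℝ} (hu : Integrable u) {ρ : ℝ}
    (hsupp : Function.support u ⊆ {x : Spc m | ‖x.2‖ ≤ ρ}) (ξ₁ : ℝ)
    (ξ' : EuclideanSpace ℝ (Fin m)) :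
    ‖2 * ft u (ξ₁, 0) - ft u (ξ₁, ξ') - ft u (ξ₁, -ξ')‖
      ≤ (2 * π) ^ (-((m : ℝ) + 1) / 2) * (ρ ^ 2 * ‖ξ'‖ ^ 2 * ∫ x, |u x|) := by
  rw [second_diff_ft_eq hu, norm_mul, Complex.norm_real,
    Real.norm_of_nonneg (Real.rpow_nonneg (by positivity) _), ← integral_const_mul]
  refine mul_le_mul_of_nonneg_left (norm_integral_le_of_norm_le (hu.abs.const_mul _)
    (ae_of_all _ fun x => ?_)) (Real.rpow_nonneg (by positivity) _)
  set t := ⟪x.2, ξ'⟫_ℝ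
  have hcos : 2 - 2 * Real.cos t ≤ t ^ 2 := by linarith [Real.one_sub_sq_div_two_le_cos (x := t)]
  rw [norm_mul, norm_mul, norm_cexp_neg_I_mul, mul_one, Complex.norm_real, Complex.norm_real,
    Real.norm_eq_abs, Real.norm_of_nonneg (by linarith [Real.cos_le_one t]), mul_comm]
  by_cases hx : u x = 0
  · simp [hx]
  have ht : |t| ≤ ρ * ‖ξ'‖ :=
    (abs_real_inner_le_norm _ _).trans (mul_le_mul_of_nonneg_right (hsupp hx) (norm_nonneg _))
  have ht2 : t ^ 2 ≤ ρ ^ 2 * ‖ξ'‖ ^ 2 := by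
    rw [← mul_pow, ← sq_abs]
    exact pow_le_pow_left₀ (abs_nonneg t) ht 2
  exact mul_le_mul_of_nonneg_right (hcos.trans ht2) (abs_nonneg _)

end Fourier

section Splitting

variable {m : ℕ}

def crossMode (u : Spc m → ℝ) (ξ₁ : ℝ) : ℂ :=
  (((2 * π) ^ (-(m : ℝ) / 2) : ℝ) : ℂ) * ft1 (crossA u) ξ₁

def nlWeight (ε : ℝ) (ξ : Spc m) : ℝ := gam (m + 1) ε * (ξ.1 ^ 2 / (ε ^ 2 * ξ.1 ^ 2 + ‖ξ.2‖ ^ 2))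

def nenDensity (ε : ℝ) (u : Spc m → ℝ) (ξ : Spc m) : ℝ := nlWeight ε ξ * ‖ft u ξ‖ ^ 2

def n1Density (ε η : ℝ) (u : Spc m → ℝ) (ξ : Spc m) : ℝ :=
  nlWeight ε ξ * (‖crossMode u ξ.1‖ ^ 2 * Dind m η (crossA u) ξ)

def n2Density (ε η : ℝ) (u : Spc m → ℝ) (ξ : Spc m) : ℝ :=
  nlWeight ε ξ * ‖ft u ξ - crossMode u ξ.1 * (Dind m η (crossA u) ξ : ℂ)‖ ^ 2

theorem Dind_eq_zero_or_one (η : ℝ) (A : ℝ → ℝ) (ξ : Spc m) :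
    Dind m η A ξ = 0 ∨ Dind m η A ξ = 1 := by
  unfold Dind
  split_ifs <;> simp

theorem Dind_eq_one_iff (η : ℝ) (A : ℝ → ℝ) (ξ : Spc m) :
    Dind m η A ξ = 1 ↔ ‖ξ.2‖ ≤ η * √‖ft1 A ξ.1‖ := by
  unfold Dind
  split_ifs <;> simp [*]

theorem Dind_nonneg (η : ℝ) (A : ℝ → ℝ) (ξ : Spc m) : 0 ≤ Dind m η A ξ := by
  rcases Dind_eq_zero_or_one η A ξ with h | h <;> simp [h]

theorem gam_nonneg (n : ℕ) {ε : ℝ} (hε : 0 ≤ ε) : 0 ≤ gam n ε := by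
  unfold gam
  split_ifs <;> positivity

theorem nlWeight_nonneg {ε : ℝ} (hε : 0 ≤ ε) (ξ : Spc m) : 0 ≤ nlWeight ε ξ :=
  mul_nonneg (gam_nonneg _ hε) (by positivity)

theorem norm_crossMode (u : Spc m → ℝ) (ξ₁ : ℝ) :
    ‖crossMode u ξ₁‖ = (2 * π) ^ (-(m : ℝ) / 2) * ‖ft1 (crossA u) ξ₁‖ := by
  rw [crossMode, norm_mul, Complex.norm_real,
    Real.norm_of_nonneg (Real.rpow_nonneg (by positivity) _)]

theorem Nen_eq (ε : ℝ) (u : Spc m → ℝ) :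
    Nen m ε u = ∫⁻ ξ, ENNReal.ofReal (nenDensity ε u ξ) := rfl

theorem N2_eq (ε η : ℝ) (u : Spc m → ℝ) :
    N2 m ε η u = ∫⁻ ξ, ENNReal.ofReal (n2Density ε η u ξ) := rfl

theorem N1_eq (ε η : ℝ) (u : Spc m → ℝ) :
    N1 m ε η u = ∫⁻ ξ, ENNReal.ofReal (n1Density ε η u ξ) := by
  have hq : ((2 * π) ^ (-(m : ℝ) / 2)) ^ 2 = ((2 * π) ^ m)⁻¹ := by
    rw [← Real.rpow_mul_natCast (by positivity), show -(m : ℝ) / 2 * (2 : ℕ) = -(m : ℝ) by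
      push_cast; ring, Real.rpow_neg (by positivity), Real.rpow_natCast]
  refine lintegral_congr fun ξ => congrArg ENNReal.ofReal ?_
  rw [n1Density, nlWeight, norm_crossMode, mul_pow ((2 * π) ^ (-(m : ℝ) / 2)), hq]
  ring

variable {ε : ℝ} (η : ℝ) {u : Spc m → ℝ}

theorem n1Density_nonneg (hε : 0 ≤ ε) (u : Spc m → ℝ) (ξ : Spc m) : 0 ≤ n1Density ε η u ξ :=
  mul_nonneg (nlWeight_nonneg hε ξ) (mul_nonneg (sq_nonneg _) (Dind_nonneg η _ ξ))

theorem n2Density_nonneg (hε : 0 ≤ ε) (u : Spc m → ℝ) (ξ : Spc m) : 0 ≤ n2Density ε η u ξ :=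
  mul_nonneg (nlWeight_nonneg hε ξ) (sq_nonneg _)

theorem measurable_nlWeight (ε : ℝ) : Measurable (nlWeight (m := m) ε) := by
  unfold nlWeight
  fun_prop

theorem measurable_nenDensity (hu : Measurable u) : Measurable (nenDensity ε u) :=
  (measurable_nlWeight ε).mul ((measurable_ft hu).norm.pow_const 2)

theorem measurable_n1Density (hu : Measurable u) : Measurable (n1Density ε η u) := by
  have hA := measurable_crossA hu
  have hmode : Measurable (crossMode u) := (measurable_ft1 hA).const_mul _
  exact (measurable_nlWeight ε).mul
    (((hmode.comp measurable_fst).norm.pow_const 2).mul (measurable_Dind η hA))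

theorem N1_add_N2_eq (hε : 0 ≤ ε) (hu : Measurable u) :
    N1 m ε η u + N2 m ε η u
      = ∫⁻ ξ, ENNReal.ofReal (n1Density ε η u ξ + n2Density ε η u ξ) := by
  simp only [N1_eq, N2_eq, ENNReal.ofReal_add (n1Density_nonneg η hε u _)
    (n2Density_nonneg η hε u _)]
  rw [lintegral_add_left (measurable_n1Density η hu).ennreal_ofReal]

theorem Nen_add_mul_N1_eq (hε : 0 ≤ ε) (hu : Measurable u) {κ : ℝ} (hκ : 0 ≤ κ) :
    Nen m ε u + ENNReal.ofReal κ * N1 m ε η u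
      = ∫⁻ ξ, ENNReal.ofReal (nenDensity ε u ξ + κ * n1Density ε η u ξ) := by
  have hnen (ξ : Spc m) : 0 ≤ nenDensity ε u ξ := mul_nonneg (nlWeight_nonneg hε ξ) (sq_nonneg _)
  simp only [Nen_eq, N1_eq, ENNReal.ofReal_add (hnen _)
    (mul_nonneg hκ (n1Density_nonneg η hε u _)), ENNReal.ofReal_mul hκ]
  rw [lintegral_add_left (measurable_nenDensity hu).ennreal_ofReal,
    lintegral_const_mul _ (measurable_n1Density η hu).ennreal_ofReal]

variable {ρ : ℝ}

theorem norm_second_diff_crossMode_mul_le (hu : Integrable u)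
    (hsupp : Function.support u ⊆ {x : Spc m | ‖x.2‖ ≤ ρ}) (hL1 : ∫ x, |u x| ≤ 1) {ξ₁ : ℝ}
    {ξ' : EuclideanSpace ℝ (Fin m)} (hξ' : ‖ξ'‖ ≤ η * √‖ft1 (crossA u) ξ₁‖) :
    ‖2 * crossMode u ξ₁ - ft u (ξ₁, ξ') - ft u (ξ₁, -ξ')‖ * ‖crossMode u ξ₁‖
      ≤ ρ ^ 2 * η ^ 2 * ‖crossMode u ξ₁‖ ^ 2 := by
  set B := ‖ft1 (crossA u) ξ₁‖
  set q : ℝ := (2 * π) ^ (-(m : ℝ) / 2)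
  have hq : 0 ≤ q := Real.rpow_nonneg (by positivity) _
  have hC0 : (2 * π) ^ (-((m : ℝ) + 1) / 2) ≤ q :=
    Real.rpow_le_rpow_of_exponent_le (by linarith [Real.pi_gt_three]) (by linarith)
  have hξ'2 : ‖ξ'‖ ^ 2 ≤ η ^ 2 * B :=
    calc ‖ξ'‖ ^ 2 ≤ (η * √B) ^ 2 := pow_le_pow_left₀ (norm_nonneg _) hξ' 2
      _ = η ^ 2 * B := by rw [mul_pow, Real.sq_sqrt (norm_nonneg _)]
  have hdiff : ‖2 * crossMode u ξ₁ - ft u (ξ₁, ξ') - ft u (ξ₁, -ξ')‖ ≤ q * (ρ ^ 2 * η ^ 2 * B) :=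
    calc _ ≤ (2 * π) ^ (-((m : ℝ) + 1) / 2) * (ρ ^ 2 * ‖ξ'‖ ^ 2 * ∫ x, |u x|) := by
          rw [crossMode, ← ft_fst_zero hu]
          exact norm_second_diff_ft_le hu hsupp ξ₁ ξ'
      _ ≤ q * (ρ ^ 2 * (η ^ 2 * B) * 1) := by gcongr
      _ = q * (ρ ^ 2 * η ^ 2 * B) := by ring
  rw [norm_crossMode]
  calc _ ≤ q * (ρ ^ 2 * η ^ 2 * B) * (q * B) := by gcongr
    _ = ρ ^ 2 * η ^ 2 * (q * B) ^ 2 := by ring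

theorem densities_add_reflectSnd_le (hε : 0 ≤ ε) (hu : Integrable u)
    (hsupp : Function.support u ⊆ {x : Spc m | ‖x.2‖ ≤ ρ}) (hL1 : ∫ x, |u x| ≤ 1) (ξ : Spc m) :
    n1Density ε η u ξ + n2Density ε η u ξ
        + (n1Density ε η u (reflectSnd m ξ) + n2Density ε η u (reflectSnd m ξ))
      ≤ nenDensity ε u ξ + ρ ^ 2 * η ^ 2 * n1Density ε η u ξ
        + (nenDensity ε u (reflectSnd m ξ) + ρ ^ 2 * η ^ 2 * n1Density ε η u (reflectSnd m ξ)) := by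
  obtain ⟨ξ₁, ξ'⟩ := ξ
  have hW : nlWeight ε (ξ₁, -ξ') = nlWeight ε (ξ₁, ξ') := by simp [nlWeight]
  have hD : Dind m η (crossA u) (ξ₁, -ξ') = Dind m η (crossA u) (ξ₁, ξ') := by simp [Dind]
  have hpair := split_energy_pair_le (ft u (ξ₁, ξ')) (ft u (ξ₁, -ξ')) (crossMode u ξ₁)
    (Dind_eq_zero_or_one η (crossA u) (ξ₁, ξ')) fun h1 => norm_second_diff_crossMode_mul_le η hu
      hsupp hL1 ((Dind_eq_one_iff η (crossA u) (ξ₁, ξ')).mp h1)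
  have := mul_le_mul_of_nonneg_left hpair (nlWeight_nonneg hε (ξ₁, ξ'))
  simp only [n1Density, n2Density, nenDensity, reflectSnd_apply, hW, hD]
  linarith

end Splitting

theorem statement11_general (m : ℕ) (ε ρ η : ℝ) (hε : 0 < ε)
    (u : Spc m → ℝ) (hmeas : Measurable u) (h01 : ∀ x, u x = 0 ∨ u x = 1)
    (hmass : (∫ x : Spc m, u x) = 1)
    (hsupp : Function.support u ⊆ {x : Spc m | ‖x.2‖ < ρ}) :
    N1 m ε η u + N2 m ε η u ≤ Nen m ε u + ENNReal.ofReal (ρ^2 * η^2) * N1 m ε η u := by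
  have hu_nonneg (x : Spc m) : 0 ≤ u x := by rcases h01 x with h | h <;> simp [h]
  have hu : Integrable u := Integrable.of_integral_ne_zero (by simp [hmass])
  have hL1 : ∫ x, |u x| ≤ 1 := by simp_rw [abs_of_nonneg (hu_nonneg _), hmass, le_refl]
  have hsupp' : Function.support u ⊆ {x : Spc m | ‖x.2‖ ≤ ρ} :=
    hsupp.trans (Set.ofPred_subset_ofPred.mpr fun _ => le_of_lt)
  rw [N1_add_N2_eq η hε.le hmeas, Nen_add_mul_N1_eq η hε.le hmeas (by positivity)]
  exact lintegral_ofReal_le_of_add_comp_le (reflectSnd m) (measurePreserving_reflectSnd m)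
    (fun ξ => add_nonneg (n1Density_nonneg η hε.le u ξ) (n2Density_nonneg η hε.le u ξ))
    ((measurable_nenDensity hmeas).add ((measurable_n1Density η hmeas).const_mul _))
    (densities_add_reflectSnd_le η hε.le hu hsupp' hL1)

/-- lower bound on the nonlocal energy,
    N_ε^{(n)}[u] ≥ (1 - ρ²η²) N_{ε,η,1}[u] + N_{ε,η,2}[u], stated in [0,∞] in the
    rearranged (equivalent) form N_{ε,η,1} + N_{ε,η,2} ≤ N_ε + ρ²η²·N_{ε,η,1}. -/
theorem statement11 (m : ℕ) (hm : 1 ≤ m) (ε ρ η : ℝ) (hε : 0 < ε) (hρ : 0 < ρ) (hη : 0 < η)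
    (u : Spc m → ℝ) (hmeas : Measurable u) (h01 : ∀ x, u x = 0 ∨ u x = 1)
    (hmass : (∫ x : Spc m, u x) = 1)
    (hsupp : Function.support u ⊆ {x : Spc m | ‖x.2‖ < ρ}) :
    N1 m ε η u + N2 m ε η u ≤ Nen m ε u + ENNReal.ofReal (ρ^2 * η^2) * N1 m ε η u :=
  statement11_general m ε ρ η hε u hmeas h01 hmass hsupp
end
end

section
/- Low-frequency L^{5/2} bound in dimension 2: let ρ > 2, ε ∈ (0,1), η ∈ (0, 1/(2ρ)), and let u : ℝ² → {0,1} be measurable with ∫_{ℝ²} u = 1 and supp u ⊂ ℝ × (−ρ, ρ). Set A := 𝔸[u]. Then there is a constant C = C(η) such that ∫_{{ξ₁ ∈ ℝ : η |Â(ξ₁)|^{1/2} ≤ ε |ξ₁|}} |Â(ξ₁)|^{5/2} dξ₁ ≤ C · ε · N_ε^(2)[u]. -/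
open MeasureTheory Real Filter Topology ENNReal

noncomputable section

/-!
For fixed `ξ₁ = t` write `P(s) = ∫ u(x) e^{-i(x₁ t + x₂ s)} dx`, so that `Â(t) = (2π)^{-1/2} P(0)`
and `û(t, s) = (2π)^{-1} P(s)`. As `u ≥ 0` has unit mass and lives in `|x₂| < ρ`, the average of `P`
over `[-T, T]` differs from `P(0)` by `O(ρ² T²)`; for `T = η |Â(t)|^{1/2}` and `ηρ < 1/2` this error
is at most half of `|P(0)|`, so `∫_{-T}^{T} |P|² ≳ T |P(0)|² ∼ η |Â(t)|^{5/2}`. When `T ≤ ε |t|`, the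
multiplier `ε t² / (ε² t² + s²)` of `N_ε` is at least `1 / (2ε)` on `|s| ≤ T`, and integrating over
`t` gives the bound with `C = 8π / η`.
-/

open Complex

lemma norm_cexp_neg_I_mul_ofReal (θ : ℝ) : ‖cexp (-(I * θ))‖ = 1 := by
  rw [norm_exp]; simp

lemma norm_mul_cexp_neg_I_mul_ofReal (z : ℂ) (θ : ℝ) : ‖z * cexp (-(I * θ))‖ = ‖z‖ := by
  rw [norm_mul, norm_cexp_neg_I_mul_ofReal, mul_one]

lemma norm_cexp_neg_I_mul_ofReal_sub_one_add_le (θ : ℝ) :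
    ‖cexp (-(I * θ)) - 1 + I * θ‖ ≤ 2 * θ ^ 2 := by
  have hnorm : ‖-(I * (θ : ℂ))‖ = |θ| := by simp
  rcases le_or_gt |θ| 1 with hθ | hθ
  · have h := norm_exp_sub_one_sub_id_le (x := -(I * (θ : ℂ))) (by rwa [hnorm])
    rw [hnorm, sq_abs, sub_neg_eq_add] at h
    linarith [sq_nonneg θ]
  · have h : ‖cexp (I * ((-θ : ℝ) : ℂ)) - 1‖ ≤ ‖-θ‖ := norm_exp_I_mul_ofReal_sub_one_le
    rw [ofReal_neg, mul_neg, norm_neg, Real.norm_eq_abs] at h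
    calc ‖cexp (-(I * θ)) - 1 + I * θ‖ ≤ ‖cexp (-(I * θ)) - 1‖ + ‖I * (θ : ℂ)‖ := norm_add_le _ _
      _ ≤ |θ| + |θ| := by gcongr; simp
      _ ≤ 2 * θ ^ 2 := by nlinarith [sq_abs θ]

lemma norm_setIntegral_Icc_cexp_sub_le (y : ℝ) {T : ℝ} (hT : 0 ≤ T) :
    ‖(∫ s in Set.Icc (-T) T, cexp (-(I * ((y * s : ℝ) : ℂ)))) - ((2 * T : ℝ) : ℂ)‖
      ≤ 4 * y ^ 2 * T ^ 3 := by
  have hle : -T ≤ T := by linarith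
  have hlin : ∫ s in (-T)..T, I * ((y * s : ℝ) : ℂ) = 0 := by
    rw [intervalIntegral.integral_const_mul, intervalIntegral.integral_ofReal,
      intervalIntegral.integral_const_mul, integral_id]
    simp
  have hsplit : (∫ s in (-T)..T, cexp (-(I * ((y * s : ℝ) : ℂ)))) - ((2 * T : ℝ) : ℂ)
      = ∫ s in (-T)..T, (cexp (-(I * ((y * s : ℝ) : ℂ))) - 1 + I * ((y * s : ℝ) : ℂ)) := by
    rw [intervalIntegral.integral_add (by apply Continuous.intervalIntegrable; fun_prop)
        (by apply Continuous.intervalIntegrable; fun_prop), hlin,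
      intervalIntegral.integral_sub (by apply Continuous.intervalIntegrable; fun_prop)
        intervalIntegrable_const, intervalIntegral.integral_const, add_zero, real_smul, mul_one]
    push_cast
    ring
  rw [integral_Icc_eq_integral_Ioc, ← intervalIntegral.integral_of_le hle, hsplit]
  calc _ ≤ 2 * (y * T) ^ 2 * |T - -T| := by
        refine intervalIntegral.norm_integral_le_of_norm_le_const fun s hs => ?_
        rw [Set.uIoc_of_le hle] at hs
        refine (norm_cexp_neg_I_mul_ofReal_sub_one_add_le _).trans ?_
        have hs2 : s ^ 2 ≤ T ^ 2 := sq_le_sq' (by linarith [hs.1]) hs.2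
        rw [mul_pow, mul_pow]
        exact mul_le_mul_of_nonneg_left (mul_le_mul_of_nonneg_left hs2 (sq_nonneg y)) two_pos.le
    _ = 4 * y ^ 2 * T ^ 3 := by rw [abs_of_nonneg (by linarith)]; ring

section PhaseIntegral

variable {α : Type*} [MeasurableSpace α] {μ : Measure α} {c : α → ℂ} {φ : α → ℝ}

def phaseIntegral (μ : Measure α) (c : α → ℂ) (φ : α → ℝ) (s : ℝ) : ℂ :=
  ∫ x, c x * cexp (-(I * ((φ x * s : ℝ) : ℂ))) ∂μ

lemma phaseIntegral_zero : phaseIntegral μ c φ 0 = ∫ x, c x ∂μ := by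
  simp [phaseIntegral]

lemma continuous_phaseIntegral (hc : Integrable c μ) (hφ : Measurable φ) :
    Continuous (phaseIntegral μ c φ) := by
  refine continuous_of_dominated (fun s => hc.1.mul (by fun_prop : Measurable fun x =>
      cexp (-(I * ((φ x * s : ℝ) : ℂ)))).aestronglyMeasurable)
    (fun s => ?_) hc.norm (.of_forall fun x => by fun_prop)
  exact .of_forall fun x => (norm_mul_cexp_neg_I_mul_ofReal _ _).le

lemma norm_setIntegral_phaseIntegral_sub_le [SFinite μ] {ρ T : ℝ} (hc : Integrable c μ)
    (hφ : Measurable φ) (hsupp : Function.support c ⊆ {x | |φ x| ≤ ρ}) (hT : 0 ≤ T) :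
    ‖(∫ s in Set.Icc (-T) T, phaseIntegral μ c φ s) - ((2 * T : ℝ) : ℂ) * phaseIntegral μ c φ 0‖
      ≤ 4 * ρ ^ 2 * T ^ 3 * ∫ x, ‖c x‖ ∂μ := by
  set F : ℝ → α → ℂ := fun s x => c x * cexp (-(I * ((φ x * s : ℝ) : ℂ)))
  have hF : Integrable (Function.uncurry F) ((volume.restrict (Set.Icc (-T) T)).prod μ) := by
    refine Integrable.mono' ((integrable_const (1 : ℝ)).mul_prod hc.norm)
      ((hc.1.comp_quasiMeasurePreserving Measure.quasiMeasurePreserving_snd).mul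
        (by fun_prop : Measurable fun p : ℝ × α =>
          cexp (-(I * ((φ p.2 * p.1 : ℝ) : ℂ)))).aestronglyMeasurable) (.of_forall fun p => ?_)
    rw [Function.uncurry_apply_pair, one_mul, norm_mul_cexp_neg_I_mul_ofReal]
  have hFx : Integrable (fun x => ∫ s in Set.Icc (-T) T, F s x) μ := hF.integral_prod_right
  -- by Fubini, `∫ P - 2T P(0) = ∫ c(x) (K(φ x) - 2T)` with `K(y) = ∫_{-T}^{T} e^{-iys} ds`
  have hswap : (∫ s in Set.Icc (-T) T, phaseIntegral μ c φ s)
      - ((2 * T : ℝ) : ℂ) * phaseIntegral μ c φ 0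
      = ∫ x, c x * ((∫ s in Set.Icc (-T) T, cexp (-(I * ((φ x * s : ℝ) : ℂ))))
          - ((2 * T : ℝ) : ℂ)) ∂μ := by
    rw [phaseIntegral_zero]
    simp only [phaseIntegral]
    rw [integral_integral_swap hF, ← integral_const_mul,
      ← integral_sub hFx (hc.const_mul _)]
    simp_rw [F, integral_const_mul, mul_sub, mul_comm]
  rw [hswap, ← integral_const_mul]
  refine norm_integral_le_of_norm_le (hc.norm.const_mul _) (.of_forall fun x => ?_)
  rw [norm_mul, mul_comm]
  rcases eq_or_ne (c x) 0 with hx | hx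
  · simp [hx]
  have hφx : φ x ^ 2 ≤ ρ ^ 2 := sq_le_sq' (abs_le.1 (hsupp hx)).1 (abs_le.1 (hsupp hx)).2
  gcongr
  exact (norm_setIntegral_Icc_cexp_sub_le (φ x) hT).trans (by gcongr)

lemma mul_sq_norm_phaseIntegral_zero_le [SFinite μ] {ρ T : ℝ} (hc : Integrable c μ)
    (hφ : Measurable φ) (hsupp : Function.support c ⊆ {x | |φ x| ≤ ρ}) (hT : 0 ≤ T)
    (h : 4 * ρ ^ 2 * T ^ 2 * ∫ x, ‖c x‖ ∂μ ≤ ‖phaseIntegral μ c φ 0‖) :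
    T * ‖phaseIntegral μ c φ 0‖ ^ 2 / 2
      ≤ ∫ s in Set.Icc (-T) T, ‖phaseIntegral μ c φ s‖ ^ 2 := by
  set P := phaseIntegral μ c φ
  rcases (norm_nonneg (P 0)).eq_or_lt with hb | hb
  · rw [← hb]
    simpa using setIntegral_nonneg measurableSet_Icc fun s _ => sq_nonneg ‖P s‖
  set b := ‖P 0‖
  have hP : Continuous P := continuous_phaseIntegral hc hφ
  have hPint : IntegrableOn (fun s => ‖P s‖) (Set.Icc (-T) T) := hP.norm.integrableOn_Icc
  have hP2int : IntegrableOn (fun s => ‖P s‖ ^ 2) (Set.Icc (-T) T) :=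
    (hP.norm.pow 2).integrableOn_Icc
  have hconst : IntegrableOn (fun _ => b / 4) (Set.Icc (-T) T) :=
    integrableOn_const measure_Icc_lt_top.ne
  have hlow : T * b ≤ ∫ s in Set.Icc (-T) T, ‖P s‖ := by
    have hdiff := norm_setIntegral_phaseIntegral_sub_le hc hφ hsupp hT
    have htri := norm_sub_norm_le (((2 * T : ℝ) : ℂ) * P 0) (∫ s in Set.Icc (-T) T, P s)
    rw [norm_sub_rev, norm_mul, Complex.norm_real, Real.norm_of_nonneg (by linarith)] at htri
    have : 4 * ρ ^ 2 * T ^ 3 * ∫ x, ‖c x‖ ∂μ ≤ T * b := by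
      nlinarith [mul_le_mul_of_nonneg_left h hT]
    linarith [norm_integral_le_integral_norm (μ := volume.restrict (Set.Icc (-T) T)) P]
  have hamgm : ∫ s in Set.Icc (-T) T, ‖P s‖
      ≤ ∫ s in Set.Icc (-T) T, (b / 4 + ‖P s‖ ^ 2 / b) := by
    refine setIntegral_mono hPint (hconst.add (hP2int.div_const b)) fun s => ?_
    rw [← sub_nonneg]
    have : b / 4 + ‖P s‖ ^ 2 / b - ‖P s‖ = (‖P s‖ - b / 2) ^ 2 / b := by field_simp; ring
    rw [this]
    positivity
  rw [integral_add hconst (hP2int.div_const b),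
    setIntegral_const, integral_div, Real.volume_real_Icc, max_eq_left (by linarith),
    smul_eq_mul] at hamgm
  have : T * b / 2 ≤ (∫ s in Set.Icc (-T) T, ‖P s‖ ^ 2) / b := by linarith
  rw [le_div_iff₀ hb] at this
  linarith

end PhaseIntegral

lemma integrable_crossA {m : ℕ} {u : Spc m → ℝ} (hu : Integrable u) : Integrable (crossA u) := by
  rw [Measure.volume_eq_prod] at hu
  exact hu.integral_prod_left

lemma ft1_eq_phaseIntegral (f : ℝ → ℝ) (ξ : ℝ) :
    ft1 f ξ = (((2 * π) ^ (-(1:ℝ)/2) : ℝ) : ℂ) * phaseIntegral volume (fun x => (f x : ℂ)) id ξ :=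
  rfl

lemma continuous_ft1 {f : ℝ → ℝ} (hf : Integrable f) : Continuous (ft1 f) := by
  rw [funext (ft1_eq_phaseIntegral f)]
  exact continuous_const.mul (continuous_phaseIntegral hf.ofReal measurable_id)

lemma continuous_ft {m : ℕ} {u : Spc m → ℝ} (hu : Integrable u) : Continuous (ft u) := by
  refine continuous_const.mul (continuous_of_dominated (bound := fun x => ‖u x‖)
    (fun ξ => hu.ofReal.1.mul (Continuous.aestronglyMeasurable (by fun_prop)))
    (fun ξ => .of_forall fun x => ?_) hu.norm (.of_forall fun x => by fun_prop))
  rw [norm_mul_cexp_neg_I_mul_ofReal, Complex.norm_real]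

lemma norm_euclideanSpace_fin_one (y : EuclideanSpace ℝ (Fin 1)) : ‖y‖ = |y 0| := by
  rw [EuclideanSpace.norm_eq, Fin.sum_univ_one, Real.norm_eq_abs, sq_abs, Real.sqrt_sq_eq_abs]

lemma rpow_five_halves {a : ℝ} (ha : 0 ≤ a) : a ^ ((5 : ℝ) / 2) = a ^ 2 * √a := by
  rw [Real.sqrt_eq_rpow, ← Real.rpow_natCast, ← Real.rpow_add' ha (by norm_num)]
  norm_num

lemma inv_two_mul_le_mul_sq_div {ε t r : ℝ} (hε : 0 < ε) (ht : t ≠ 0) (hr : r ^ 2 ≤ (ε * t) ^ 2) :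
    (2 * ε)⁻¹ ≤ ε * (t ^ 2 / (ε ^ 2 * t ^ 2 + r ^ 2)) := by
  rw [mul_div_assoc', le_div_iff₀ (by positivity), inv_mul_le_iff₀ (by positivity)]
  nlinarith

def nenIntegrand (m : ℕ) (ε : ℝ) (u : Spc m → ℝ) (ξ : Spc m) : ℝ≥0∞ :=
  ENNReal.ofReal (gam (m+1) ε * (ξ.1^2 / (ε^2 * ξ.1^2 + ‖ξ.2‖^2)) * ‖ft u ξ‖^2)

lemma measurable_nenIntegrand {m : ℕ} {u : Spc m → ℝ} (hu : Integrable u) (ε : ℝ) :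
    Measurable (nenIntegrand m ε u) := by
  have := (continuous_ft hu).measurable
  unfold nenIntegrand
  fun_prop

lemma lintegral_euclideanSpace_fin_one (f : ℝ → ℝ≥0∞) :
    ∫⁻ y : EuclideanSpace ℝ (Fin 1), f (y 0) = ∫⁻ s, f s := by
  let e := (MeasurableEquiv.toLp 2 (Fin 1 → ℝ)).symm.trans (MeasurableEquiv.funUnique (Fin 1) ℝ)
  have he : MeasurePreserving e :=
    (volume_preserving_funUnique (Fin 1) ℝ).comp (PiLp.volume_preserving_ofLp (Fin 1))
  exact he.lintegral_comp_emb e.measurableEmbedding f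

section Modulation

variable {m : ℕ} {u : Spc m → ℝ}

def modulate (u : Spc m → ℝ) (t : ℝ) (x : Spc m) : ℂ :=
  u x * cexp (-(I * ((x.1 * t : ℝ) : ℂ)))

lemma norm_modulate (t : ℝ) (x : Spc m) : ‖modulate u t x‖ = |u x| := by
  rw [modulate, norm_mul_cexp_neg_I_mul_ofReal, Complex.norm_real, Real.norm_eq_abs]

lemma integrable_modulate (hu : Integrable u) (t : ℝ) : Integrable (modulate u t) :=
  hu.ofReal.mul_bdd (by fun_prop) (.of_forall fun x => (norm_cexp_neg_I_mul_ofReal _).le)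

lemma support_modulate (t : ℝ) : Function.support (modulate u t) = Function.support u := by
  ext x
  simp [modulate, Complex.exp_ne_zero]

lemma ft1_crossA_eq_integral_modulate (hu : Integrable u) (t : ℝ) :
    ft1 (crossA u) t = (((2 * π) ^ (-(1:ℝ)/2) : ℝ) : ℂ) * ∫ x, modulate u t x := by
  rw [ft1, Measure.volume_eq_prod,
    integral_prod _ (by rw [← Measure.volume_eq_prod]; exact integrable_modulate hu t)]
  congr 2 with x₁
  simp only [crossA, modulate, integral_mul_const]
  exact congrArg (· * _) integral_ofReal.symm

lemma norm_phaseIntegral_modulate_zero (hu : Integrable u) (t : ℝ) (φ : Spc m → ℝ) :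
    ‖phaseIntegral volume (modulate u t) φ 0‖ = √(2 * π) * ‖ft1 (crossA u) t‖ := by
  rw [phaseIntegral_zero, ft1_crossA_eq_integral_modulate hu, norm_mul, Complex.norm_real,
    Real.norm_of_nonneg (by positivity), neg_div, Real.rpow_neg (by positivity),
    ← Real.sqrt_eq_rpow, mul_inv_cancel_left₀ (by positivity)]

end Modulation

section Dimension2

variable {u : Spc 1 → ℝ} {ε : ℝ}

lemma ft_eq_phaseIntegral_modulate (t : ℝ) (y : EuclideanSpace ℝ (Fin 1)) :
    ft u (t, y)
      = (((2 * π)⁻¹ : ℝ) : ℂ) * phaseIntegral volume (modulate u t) (fun x => x.2 0) (y 0) := by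
  rw [ft, phaseIntegral, show -(((1 : ℕ) : ℝ) + 1) / 2 = -1 by norm_num, Real.rpow_neg_one]
  congr 2 with x
  rw [modulate, mul_assoc, ← Complex.exp_add]
  congr 2
  simp [PiLp.inner_apply]
  ring

lemma ofReal_setIntegral_le_lintegral_nenIntegrand (hu : Integrable u) (hε : 0 < ε) {t T : ℝ}
    (hT : 0 < T) (hTt : T ≤ ε * |t|) :
    ENNReal.ofReal ((8 * π ^ 2 * ε)⁻¹ *
        ∫ s in Set.Icc (-T) T, ‖phaseIntegral volume (modulate u t) (fun x => x.2 0) s‖ ^ 2)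
      ≤ ∫⁻ y, nenIntegrand 1 ε u (t, y) := by
  set P := phaseIntegral volume (modulate u t) (fun x => x.2 0)
  have hP : Continuous P := continuous_phaseIntegral (integrable_modulate hu t) (by fun_prop)
  have ht : t ≠ 0 := by rintro rfl; simp at hTt; linarith
  have hint : IntegrableOn (fun s => (8 * π ^ 2 * ε)⁻¹ * ‖P s‖ ^ 2) (Set.Icc (-T) T) :=
    (by fun_prop : Continuous fun s => (8 * π ^ 2 * ε)⁻¹ * ‖P s‖ ^ 2).integrableOn_Icc
  rw [← integral_const_mul, ofReal_integral_eq_lintegral_ofReal hint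
      (ae_of_all _ fun s => by positivity),
    ← lintegral_indicator measurableSet_Icc, ← lintegral_euclideanSpace_fin_one]
  refine lintegral_mono fun y => ?_
  by_cases hy : y 0 ∈ Set.Icc (-T) T
  · rw [Set.indicator_of_mem hy]
    refine ENNReal.ofReal_le_ofReal ?_
    have hy' : ‖y‖ ^ 2 ≤ (ε * t) ^ 2 := by
      rw [norm_euclideanSpace_fin_one, ← sq_abs (ε * t), abs_mul, abs_of_pos hε]
      exact pow_le_pow_left₀ (abs_nonneg _) ((abs_le.2 hy).trans hTt) 2
    have hmult := inv_two_mul_le_mul_sq_div hε ht hy'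
    rw [ft_eq_phaseIntegral_modulate, norm_mul, Complex.norm_real,
      Real.norm_of_nonneg (by positivity)]
    calc (8 * π ^ 2 * ε)⁻¹ * ‖P (y 0)‖ ^ 2 = (2 * ε)⁻¹ * ((2 * π)⁻¹ * ‖P (y 0)‖) ^ 2 := by
          field_simp; ring
      _ ≤ _ := by gcongr; exact hmult
  · rw [Set.indicator_of_notMem hy]
    exact zero_le

lemma ofReal_rpow_le_lintegral_nenIntegrand {ρ η : ℝ} (hu0 : 0 ≤ u) (hu : Integrable u)
    (hmass : ∫ x, u x = 1) (hsupp : Function.support u ⊆ {x : Spc 1 | ‖x.2‖ < ρ})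
    (hε : 0 < ε) (hη : 0 < η) (hηρ : 4 * η ^ 2 * ρ ^ 2 ≤ 1) {t : ℝ}
    (ht : η * √‖ft1 (crossA u) t‖ ≤ ε * |t|) :
    ENNReal.ofReal (‖ft1 (crossA u) t‖ ^ ((5 : ℝ) / 2))
      ≤ ENNReal.ofReal (8 * π / η * ε) * ∫⁻ y, nenIntegrand 1 ε u (t, y) := by
  rcases (norm_nonneg (ft1 (crossA u) t)).eq_or_lt with ha | ha
  · rw [← ha, Real.zero_rpow (by norm_num)]
    simp
  have hP0 := norm_phaseIntegral_modulate_zero hu t (fun x => x.2 0)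
  set a := ‖ft1 (crossA u) t‖
  set P := phaseIntegral volume (modulate u t) (fun x => x.2 0)
  have hmass' : ∫ x, ‖modulate u t x‖ = 1 := by
    simp_rw [norm_modulate, abs_of_nonneg (hu0 _)]
    exact hmass
  have hsupp' : Function.support (modulate u t) ⊆ {x | |x.2 0| ≤ ρ} := by
    rw [support_modulate]
    exact fun x hx => (norm_euclideanSpace_fin_one x.2).symm.trans_le (hsupp hx).le
  set T := η * √a
  have hT : 0 < T := by positivity
  have hlow := mul_sq_norm_phaseIntegral_zero_le (integrable_modulate hu t) (by fun_prop)
    hsupp' hT.le (by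
      rw [hmass', hP0, mul_one, mul_pow, Real.sq_sqrt ha.le]
      have : 1 ≤ √(2 * π) := Real.one_le_sqrt.2 (by nlinarith [Real.pi_gt_three])
      nlinarith)
  rw [hP0] at hlow
  calc ENNReal.ofReal (a ^ ((5 : ℝ) / 2))
      ≤ ENNReal.ofReal (8 * π / η * ε) *
          ENNReal.ofReal ((8 * π ^ 2 * ε)⁻¹ * ∫ s in Set.Icc (-T) T, ‖P s‖ ^ 2) := by
        rw [← ENNReal.ofReal_mul (by positivity)]
        refine ENNReal.ofReal_le_ofReal ?_
        calc a ^ ((5 : ℝ) / 2)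
            = 8 * π / η * ε * ((8 * π ^ 2 * ε)⁻¹ * (T * (√(2 * π) * a) ^ 2 / 2)) := by
              rw [rpow_five_halves ha.le, mul_pow, Real.sq_sqrt (by positivity)]
              field_simp
              ring
          _ ≤ _ := by gcongr
    _ ≤ _ := by
        gcongr
        exact ofReal_setIntegral_le_lintegral_nenIntegrand hu hε hT ht

end Dimension2

/-- low-frequency L^{5/2} bound in dimension 2 (m = 1):
    ∫_{{η|Â|^{1/2} ≤ ε|ξ₁|}} |Â(ξ₁)|^{5/2} dξ₁ ≤ C(η)·ε·N_ε^{(2)}[u]. -/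
theorem statement16 (η : ℝ) (hη : 0 < η) :
    ∃ C : ℝ, 0 < C ∧ ∀ (ρ ε : ℝ), 2 < ρ → ε ∈ Set.Ioo (0:ℝ) 1 → η < 1/(2*ρ) →
      ∀ u : Spc 1 → ℝ, Measurable u → (∀ x, u x = 0 ∨ u x = 1) → (∫ x : Spc 1, u x) = 1 →
        Function.support u ⊆ {x : Spc 1 | ‖x.2‖ < ρ} →
        (∫⁻ ξ₁ in {ξ₁ : ℝ | η * Real.sqrt ‖ft1 (crossA u) ξ₁‖ ≤ ε * |ξ₁|},
            ENNReal.ofReal (‖ft1 (crossA u) ξ₁‖ ^ ((5:ℝ)/2)))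
          ≤ ENNReal.ofReal (C * ε) * Nen 1 ε u := by
  refine ⟨8 * π / η, by positivity, fun ρ ε hρ hε hηρ u _ h01 hmass hsupp => ?_⟩
  have hu0 : 0 ≤ u := fun x => by rcases h01 x with h | h <;> simp [h]
  have hu : Integrable u := Integrable.of_integral_ne_zero (by simp [hmass])
  have hηρ' : 4 * η ^ 2 * ρ ^ 2 ≤ 1 := by
    rw [lt_div_iff₀ (by linarith)] at hηρ
    nlinarith [mul_pos hη (by linarith : (0 : ℝ) < 2 * ρ)]
  have hS : MeasurableSet {t : ℝ | η * √‖ft1 (crossA u) t‖ ≤ ε * |t|} :=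
    have := continuous_ft1 (integrable_crossA hu)
    (isClosed_le (by fun_prop) (by fun_prop)).measurableSet
  calc _ ≤ ∫⁻ t in {t : ℝ | η * √‖ft1 (crossA u) t‖ ≤ ε * |t|},
          ENNReal.ofReal (8 * π / η * ε) * ∫⁻ y, nenIntegrand 1 ε u (t, y) :=
        setLIntegral_mono' hS fun t ht =>
          ofReal_rpow_le_lintegral_nenIntegrand hu0 hu hmass hsupp hε.1 hη hηρ' ht
    _ ≤ ∫⁻ t, ENNReal.ofReal (8 * π / η * ε) * ∫⁻ y, nenIntegrand 1 ε u (t, y) :=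
        setLIntegral_le_lintegral _ _
    _ = ENNReal.ofReal (8 * π / η * ε) * Nen 1 ε u := by
        rw [lintegral_const_mul' _ _ ENNReal.ofReal_ne_top, Nen, Measure.volume_eq_prod]
        exact congrArg _ (lintegral_prod _ (measurable_nenIntegrand hu ε).aemeasurable).symm
end
end

section
/- Let (f_n) be a sequence in L^∞(ℝ) with sup_n ‖f_n‖_{L^∞} < ∞ and f_n → f pointwise almost everywhere for some f ∈ L^∞(ℝ), and let (g_n) be a sequence in L²(ℝ) converging weakly in L²(ℝ) to some g ∈ L²(ℝ). Then the products f_n·g_n converge weakly in L²(ℝ) to f·g. -/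
/-!
Split `φ fₙ gₙ = φ (fₙ - f) gₙ + (φ f) gₙ`. Testing the weak convergence against `φ f ∈ L²`
handles the second term. For the first, `φ (fₙ - f) → 0` in `L²` by dominated convergence
(with majorant `2M|φ|`), while the weakly convergent `gₙ` are bounded in `L²` by the uniform
boundedness principle, so Cauchy–Schwarz sends `∫ φ (fₙ - f) gₙ` to `0`.
-/

open MeasureTheory Real Filter Topology ENNReal
open scoped NNReal

section

variable {α : Type*} [MeasurableSpace α] {μ : Measure α}

theorem tendsto_eLpNorm_zero_of_dominated {E : Type*} [NormedAddCommGroup E] {p : ℝ≥0∞}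
    (hp0 : p ≠ 0) (hp : p ≠ ∞) {u : ℕ → α → E} {F : α → ℝ}
    (hu : ∀ n, AEStronglyMeasurable (u n) μ) (hF : MemLp F p μ)
    (hbound : ∀ n, ∀ᵐ x ∂μ, ‖u n x‖ ≤ F x)
    (hlim : ∀ᵐ x ∂μ, Tendsto (u · x) atTop (𝓝 0)) :
    Tendsto (fun n => eLpNorm (u n) p μ) atTop (𝓝 0) := by
  have hp_pos : 0 < p.toReal := toReal_pos hp0 hp
  suffices Tendsto (fun n => ∫⁻ x, ‖u n x‖ₑ ^ p.toReal ∂μ) atTop (𝓝 0) by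
    simp only [eLpNorm_eq_lintegral_rpow_enorm_toReal hp0 hp]
    have := (ENNReal.continuous_rpow_const (y := 1 / p.toReal)).tendsto 0 |>.comp this
    rwa [zero_rpow_of_pos (by positivity)] at this
  rw [← lintegral_zero]
  refine tendsto_lintegral_of_dominated_convergence'
    (fun x => ‖F x‖ₑ ^ p.toReal) (fun n => (hu n).enorm.pow_const _) (fun n => ?_)
    (lintegral_rpow_enorm_lt_top_of_eLpNorm_lt_top hp0 hp hF.eLpNorm_lt_top).ne ?_
  · filter_upwards [hbound n] with x hx
    gcongr
    exact enorm_le_iff_norm_le.mpr (hx.trans (Real.le_norm_self _))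
  · filter_upwards [hlim] with x hx
    have := (ENNReal.continuous_rpow_const (y := p.toReal)).tendsto _ |>.comp
      (continuous_enorm.tendsto 0 |>.comp hx)
    rwa [enorm_zero, zero_rpow_of_pos hp_pos] at this

theorem tendsto_eLpNorm_mul_sub_of_tendsto_ae {p : ℝ≥0∞} (hp0 : p ≠ 0) (hp : p ≠ ∞)
    {φ w : α → ℝ} {v : ℕ → α → ℝ} (hφ : MemLp φ p μ) (hv : ∀ n, AEStronglyMeasurable (v n) μ)
    {M : ℝ} (hbound : ∀ n, ∀ᵐ x ∂μ, |v n x| ≤ M)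
    (hlim : ∀ᵐ x ∂μ, Tendsto (v · x) atTop (𝓝 (w x))) :
    Tendsto (fun n => eLpNorm (fun x => φ x * (v n x - w x)) p μ) atTop (𝓝 0) := by
  have hw : AEStronglyMeasurable w μ := aestronglyMeasurable_of_tendsto_ae atTop hv hlim
  have hw_bound : ∀ᵐ x ∂μ, |w x| ≤ M := by
    filter_upwards [ae_all_iff.mpr hbound, hlim] with x hx hx_lim
    exact le_of_tendsto' hx_lim.abs hx
  refine tendsto_eLpNorm_zero_of_dominated hp0 hp (F := fun x => 2 * M * |φ x|)
    (fun n => hφ.1.mul ((hv n).sub hw)) (hφ.abs.const_mul _) (fun n => ?_) ?_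
  · filter_upwards [hbound n, hw_bound] with x hvx hwx
    rw [norm_mul, Real.norm_eq_abs, Real.norm_eq_abs, mul_comm]
    gcongr
    linarith [abs_sub (v n x) (w x)]
  · filter_upwards [hlim] with x hx
    simpa using (hx.sub_const (w x)).const_mul (φ x)

theorem MeasureTheory.L2.inner_toLp_eq_integral_mul {g : α → ℝ} (hg : MemLp g 2 μ)
    (ψ : Lp ℝ 2 μ) :
    inner ℝ (hg.toLp g) ψ = ∫ x, ψ x * g x ∂μ := by
  rw [L2.inner_def]
  refine integral_congr_ae ?_
  filter_upwards [hg.coeFn_toLp] with x hx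
  simp [hx, mul_comm]

theorem exists_eLpNorm_le_of_bddAbove_integral_mul {g : ℕ → α → ℝ}
    (hg : ∀ n, MemLp (g n) 2 μ)
    (hbdd : ∀ φ : α → ℝ, MemLp φ 2 μ → BddAbove (Set.range fun n => |∫ x, φ x * g n x ∂μ|)) :
    ∃ C : ℝ≥0, ∀ n, eLpNorm (g n) 2 μ ≤ C := by
  obtain ⟨C, hC⟩ : ∃ C, ∀ n, ‖innerSL ℝ ((hg n).toLp (g n))‖ ≤ C := by
    refine banach_steinhaus fun ψ => ?_
    obtain ⟨C, hC⟩ := hbdd ψ (Lp.memLp ψ)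
    refine ⟨C, fun n => ?_⟩
    simpa [L2.inner_toLp_eq_integral_mul] using hC ⟨n, rfl⟩
  refine ⟨C.toNNReal, fun n => ?_⟩
  have hCn := hC n
  rw [innerSL_apply_norm, Lp.norm_toLp] at hCn
  calc eLpNorm (g n) 2 μ = ENNReal.ofReal (eLpNorm (g n) 2 μ).toReal :=
        (ofReal_toReal (hg n).eLpNorm_ne_top).symm
    _ ≤ ENNReal.ofReal C := ofReal_le_ofReal hCn

theorem tendsto_integral_mul_zero_of_tendsto_eLpNorm_zero {p q : ℝ≥0∞} [HolderTriple p q 1]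
    {u g : ℕ → α → ℝ} (hu : ∀ n, AEStronglyMeasurable (u n) μ)
    (hg : ∀ n, AEStronglyMeasurable (g n) μ) {C : ℝ≥0} (hC : ∀ n, eLpNorm (g n) q μ ≤ C)
    (hlim : Tendsto (fun n => eLpNorm (u n) p μ) atTop (𝓝 0)) :
    Tendsto (fun n => ∫ x, u n x * g n x ∂μ) atTop (𝓝 0) := by
  have hbound : ∀ n, ‖∫ x, u n x * g n x ∂μ‖ₑ ≤ eLpNorm (u n) p μ * C := fun n => calc
    ‖∫ x, u n x * g n x ∂μ‖ₑ ≤ ∫⁻ x, ‖u n x * g n x‖ₑ ∂μ := enorm_integral_le_lintegral_enorm _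
    _ = eLpNorm (u n • g n) 1 μ := eLpNorm_one_eq_lintegral_enorm.symm
    _ ≤ eLpNorm (u n) p μ * eLpNorm (g n) q μ := eLpNorm_smul_le_mul_eLpNorm (hg n) (hu n)
    _ ≤ eLpNorm (u n) p μ * C := by gcongr; exact hC n
  have hmajorant : Tendsto (fun n => eLpNorm (u n) p μ * C) atTop (𝓝 0) := by
    simpa using ENNReal.Tendsto.mul_const hlim (Or.inr coe_ne_top)
  exact tendsto_zero_iff_enorm_tendsto_zero.mpr <|
    tendsto_of_tendsto_of_tendsto_of_le_of_le tendsto_const_nhds hmajorant (fun _ => zero_le)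
      hbound

end

theorem statement17_general (f g : ℕ → ℝ → ℝ) (flim glim : ℝ → ℝ)
    (hfmem : ∀ n, MemLp (f n) ⊤ volume)
    (hbd : ∃ M : ℝ, ∀ n, ∀ᵐ x : ℝ ∂volume, |f n x| ≤ M)
    (hae : ∀ᵐ x : ℝ ∂volume, Tendsto (fun n => f n x) atTop (𝓝 (flim x)))
    (hflim : MemLp flim ⊤ volume)
    (hgmem : ∀ n, MemLp (g n) 2 volume)
    (hweak : ∀ φ : ℝ → ℝ, MemLp φ 2 volume →
      Tendsto (fun n => ∫ x : ℝ, φ x * g n x) atTop (𝓝 (∫ x : ℝ, φ x * glim x))) :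
    ∀ φ : ℝ → ℝ, MemLp φ 2 volume →
      Tendsto (fun n => ∫ x : ℝ, φ x * (f n x * g n x)) atTop
        (𝓝 (∫ x : ℝ, φ x * (flim x * glim x))) := by
  intro φ hφ
  obtain ⟨M, hM⟩ := hbd
  obtain ⟨C, hC⟩ := exists_eLpNorm_le_of_bddAbove_integral_mul hgmem fun ψ hψ =>
    (hweak ψ hψ).abs.bddAbove_range
  have hdiff : ∀ n, MemLp (fun x => φ x * (f n x - flim x)) 2 volume := fun n =>
    ((hfmem n).sub hflim).mul' hφ
  have hdiff_lim : Tendsto (fun n => ∫ x, φ x * (f n x - flim x) * g n x) atTop (𝓝 0) :=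
    tendsto_integral_mul_zero_of_tendsto_eLpNorm_zero (fun n => (hdiff n).1)
      (fun n => (hgmem n).1) hC
      (tendsto_eLpNorm_mul_sub_of_tendsto_ae two_ne_zero ofNat_ne_top hφ (fun n => (hfmem n).1)
        hM hae)
  have hprod : MemLp (fun x => φ x * flim x) 2 volume := hflim.mul' hφ
  have hprod_lim := hweak _ hprod
  have hsplit : ∀ n, ∫ x, φ x * (f n x * g n x) =
      (∫ x, φ x * (f n x - flim x) * g n x) + ∫ x, φ x * flim x * g n x := fun n => by
    rw [← integral_add (memLp_one_iff_integrable.mp ((hgmem n).mul' (hdiff n)))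
      (memLp_one_iff_integrable.mp ((hgmem n).mul' hprod))]
    congr 1 with x
    ring
  have hlim_eq : ∫ x, φ x * (flim x * glim x) = 0 + ∫ x, φ x * flim x * glim x := by
    simp only [zero_add, mul_assoc]
  rw [hlim_eq]
  exact (hdiff_lim.add hprod_lim).congr fun n => (hsplit n).symm

/-- if f_n is uniformly bounded in L^∞(ℝ) and converges a.e. to f ∈ L^∞(ℝ),
    and g_n ⇀ g weakly in L²(ℝ), then f_n·g_n ⇀ f·g weakly in L²(ℝ). -/
theorem statement17 (f g : ℕ → ℝ → ℝ) (flim glim : ℝ → ℝ)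
    (hfmem : ∀ n, MemLp (f n) ⊤ volume)
    (hbd : ∃ M : ℝ, ∀ n, ∀ᵐ x : ℝ ∂volume, |f n x| ≤ M)
    (hae : ∀ᵐ x : ℝ ∂volume, Tendsto (fun n => f n x) atTop (𝓝 (flim x)))
    (hflim : MemLp flim ⊤ volume)
    (hgmem : ∀ n, MemLp (g n) 2 volume) (hglim : MemLp glim 2 volume)
    (hweak : ∀ φ : ℝ → ℝ, MemLp φ 2 volume →
      Tendsto (fun n => ∫ x : ℝ, φ x * g n x) atTop (𝓝 (∫ x : ℝ, φ x * glim x))) :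
    ∀ φ : ℝ → ℝ, MemLp φ 2 volume →
      Tendsto (fun n => ∫ x : ℝ, φ x * (f n x * g n x)) atTop
        (𝓝 (∫ x : ℝ, φ x * (flim x * glim x))) :=
  statement17_general f g flim glim hfmem hbd hae hflim hgmem hweak
end

section
/- Strict decrease of the Ḣ^{1/2} double integral under shifting separated bumps together: let τ > 0 and let φ, ψ : ℝ → [0,∞) be measurable, not almost everywhere zero, with ∫∫_{ℝ×ℝ} |h(x) − h(y)|²/|x−y|² dx dy < ∞ for h = φ and h = ψ, with {φ > 0} ⊂ (−∞, 0] and {ψ > 0} ⊂ [τ, ∞). Set A(x) := φ(x) + ψ(x) and, for t ∈ (0, τ], A_t(x) := φ(x) + ψ(x + t). Then ∫∫_{ℝ×ℝ} |A(x) − A(y)|²/|x−y|² dx dy > ∫∫_{ℝ×ℝ} |A_t(x) − A_t(y)|²/|x−y|² dx dy. -/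
/-!
Since the supports of `φ` and `ψ (· + s)` meet in at most one point for `0 ≤ s ≤ τ`,
expanding the square gives `DInt (φ + ψ (· + s)) + 4 I(s) = DInt φ + DInt ψ`, where
`I(s) = ∫∫ φ(x) ψ(y) / (x - y + s)²` is the interaction of the two bumps. Shifting by `t`
moves every pair of points in the supports strictly closer together, so `I(0) < I(t)`; as the
right-hand side is finite, the strict inequality passes to the energies.
-/

open MeasureTheory Real Filter Topology ENNReal

/-- The Ḣ^{1/2}(ℝ) double integral ∫∫ |h(x) - h(y)|²/|x - y|² dx dy, valued in [0,∞]. -/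
noncomputable def DInt (h : ℝ → ℝ) : ℝ≥0∞ :=
  ∫⁻ p : ℝ × ℝ, ENNReal.ofReal ((h p.1 - h p.2)^2 / (p.1 - p.2)^2)

noncomputable def interaction (f g : ℝ → ℝ) : ℝ≥0∞ :=
  ∫⁻ p : ℝ × ℝ, ENNReal.ofReal (f p.1 * g p.2 / (p.1 - p.2)^2)

variable {f g : ℝ → ℝ}

theorem DInt_comp_add_right (s : ℝ) : DInt (fun x => g (x + s)) = DInt g := by
  unfold DInt
  conv_rhs => rw [← lintegral_add_right_eq_self _ ((s, s) : ℝ × ℝ)]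
  refine lintegral_congr fun p => ?_
  simp only [Prod.fst_add, Prod.snd_add, add_sub_add_right_eq_sub]

theorem interaction_comp_add_right (s : ℝ) :
    interaction f (fun x => g (x + s)) =
      ∫⁻ p : ℝ × ℝ, ENNReal.ofReal (f p.1 * g p.2 / (p.1 - p.2 + s)^2) := by
  conv_rhs => rw [← lintegral_add_right_eq_self _ ((0, s) : ℝ × ℝ)]
  refine lintegral_congr fun p => ?_
  simp only [Prod.fst_add, Prod.snd_add, add_zero]
  rw [show p.1 - (p.2 + s) + s = p.1 - p.2 by ring]

theorem lintegral_interaction_swap :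
    ∫⁻ p : ℝ × ℝ, ENNReal.ofReal (f p.2 * g p.1 / (p.1 - p.2)^2) = interaction f g := by
  rw [interaction, Measure.volume_eq_prod, ← lintegral_prod_swap]
  refine lintegral_congr fun p => ?_
  rw [Prod.fst_swap, Prod.snd_swap, sub_sq_comm]

-- With `ac = bd = 0` the mixed terms of `(a + c - (b + d))²` reduce to `-2(ad + bc)`.
theorem ofReal_sq_div_add_add_eq {a b c d e : ℝ} (ha : 0 ≤ a) (hb : 0 ≤ b) (hc : 0 ≤ c)
    (hd : 0 ≤ d) (he : 0 ≤ e) (hac : a * c = 0) (hbd : b * d = 0) :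
    ENNReal.ofReal ((a + c - (b + d))^2 / e) + 2 * (ENNReal.ofReal (a * d / e) +
        ENNReal.ofReal (b * c / e)) =
      ENNReal.ofReal ((a - b)^2 / e) + ENNReal.ofReal ((c - d)^2 / e) := by
  have hnum : (a + c - (b + d))^2 + 2 * (a * d + b * c) = (a - b)^2 + (c - d)^2 := by
    linear_combination 2 * hac + 2 * hbd
  rw [← ENNReal.ofReal_add (by positivity) (by positivity), ← ENNReal.ofReal_ofNat 2,
    ← ENNReal.ofReal_mul zero_le_two, ← ENNReal.ofReal_add (by positivity) (by positivity),
    ← ENNReal.ofReal_add (by positivity) (by positivity)]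
  congr 1
  linear_combination hnum / e

theorem DInt_add_add_four_mul_interaction (hf : Measurable f) (hg : Measurable g)
    (hf0 : ∀ x, 0 ≤ f x) (hg0 : ∀ x, 0 ≤ g x) (hfg : f * g =ᵐ[volume] 0) :
    DInt (fun x => f x + g x) + 4 * interaction f g = DInt f + DInt g := by
  have hfg₂ : ∀ᵐ p : ℝ × ℝ, f p.1 * g p.1 = 0 ∧ f p.2 * g p.2 = 0 := by
    rw [Measure.volume_eq_prod]
    exact (Measure.quasiMeasurePreserving_fst.ae hfg).and
      (Measure.quasiMeasurePreserving_snd.ae hfg)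
  have hcross : 4 * interaction f g = ∫⁻ p : ℝ × ℝ, 2 * (ENNReal.ofReal
      (f p.1 * g p.2 / (p.1 - p.2)^2) + ENNReal.ofReal (f p.2 * g p.1 / (p.1 - p.2)^2)) := by
    rw [lintegral_const_mul' _ _ ENNReal.ofNat_ne_top, lintegral_add_left (by fun_prop),
      lintegral_interaction_swap, interaction, ← two_mul, ← mul_assoc]
    norm_num
  unfold DInt
  rw [hcross, ← lintegral_add_left, ← lintegral_add_left]
  · refine lintegral_congr_ae (hfg₂.mono fun p ⟨h₁, h₂⟩ => ?_)
    exact ofReal_sq_div_add_add_eq (hf0 _) (hf0 _) (hg0 _) (hg0 _) (sq_nonneg _) h₁ h₂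
  all_goals fun_prop

theorem mul_comp_add_ae_eq_zero {a b s : ℝ} (hf0 : ∀ x, 0 ≤ f x) (hg0 : ∀ x, 0 ≤ g x)
    (hf : {x | 0 < f x} ⊆ Set.Iic a) (hg : {x | 0 < g x} ⊆ Set.Ici b) (hs : s ≤ b - a) :
    (f * fun x => g (x + s)) =ᵐ[volume] 0 := by
  filter_upwards [Measure.ae_ne volume a] with x hxa
  rcases (hf0 x).eq_or_lt with hfx | hfx
  · simp [← hfx]
  have hx : x < a := (hf hfx).lt_of_ne hxa
  have hgx : ¬ 0 < g (x + s) := fun hgx => by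
    have : b ≤ x + s := hg hgx
    linarith
  simp [le_antisymm (not_lt.1 hgx) (hg0 _)]

theorem interaction_lt_interaction_comp_add {a b t : ℝ} (hf : Measurable f) (hg : Measurable g)
    (hf0 : ∀ x, 0 ≤ f x) (hg0 : ∀ x, 0 ≤ g x)
    (hfne : ¬ f =ᵐ[volume] 0) (hgne : ¬ g =ᵐ[volume] 0)
    (hfsupp : {x | 0 < f x} ⊆ Set.Iic a) (hgsupp : {x | 0 < g x} ⊆ Set.Ici b)
    (ht : t ∈ Set.Ioc 0 (b - a)) (hfin : interaction f g ≠ ⊤) :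
    interaction f g < interaction f (fun x => g (x + t)) := by
  obtain ⟨ht0, htba⟩ := ht
  have hlt : ∀ p : ℝ × ℝ, p.1 ≠ a → 0 < f p.1 → 0 < g p.2 →
      ENNReal.ofReal (f p.1 * g p.2 / (p.1 - p.2)^2) <
        ENNReal.ofReal (f p.1 * g p.2 / (p.1 - p.2 + t)^2) := by
    intro p hpa hfp hgp
    have hx : p.1 < a := (hfsupp hfp).lt_of_ne hpa
    have hy : b ≤ p.2 := hgsupp hgp
    have hneg : p.1 - p.2 + t < 0 := by linarith
    have hsq : (p.1 - p.2 + t)^2 < (p.1 - p.2)^2 := by nlinarith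
    have hpos : 0 < (p.1 - p.2 + t)^2 := by nlinarith
    rw [ENNReal.ofReal_lt_ofReal_iff (div_pos (mul_pos hfp hgp) hpos)]
    exact div_lt_div_of_pos_left (mul_pos hfp hgp) hpos hsq
  have hae : ∀ᵐ p : ℝ × ℝ, p.1 ≠ a := by
    rw [Measure.volume_eq_prod]
    exact Measure.quasiMeasurePreserving_fst.ae (Measure.ae_ne volume a)
  rw [interaction_comp_add_right]
  refine lintegral_strict_mono_of_ae_le_of_ae_lt_on (by fun_prop) hfin ?_
    (s := Function.support f ×ˢ Function.support g) ?_ ?_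
  · filter_upwards [hae] with p hpa
    rcases (hf0 p.1).eq_or_lt with hfp | hfp
    · simp [← hfp]
    rcases (hg0 p.2).eq_or_lt with hgp | hgp
    · simp [← hgp]
    exact (hlt p hpa hfp hgp).le
  · rw [Measure.volume_eq_prod, Measure.prod_prod]
    exact mul_ne_zero hfne hgne
  · filter_upwards [hae] with p hpa ⟨hfp, hgp⟩
    exact hlt p hpa ((hf0 _).lt_of_ne' hfp) ((hg0 _).lt_of_ne' hgp)

theorem statement19_general (τ : ℝ) (φ ψ : ℝ → ℝ)
    (hφm : Measurable φ) (hψm : Measurable ψ)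
    (hφ0 : ∀ x, 0 ≤ φ x) (hψ0 : ∀ x, 0 ≤ ψ x)
    (hφne : ¬ φ =ᵐ[volume] (fun _ => (0:ℝ))) (hψne : ¬ ψ =ᵐ[volume] (fun _ => (0:ℝ)))
    (hφfin : DInt φ < ⊤) (hψfin : DInt ψ < ⊤)
    (hφsupp : {x : ℝ | 0 < φ x} ⊆ Set.Iic 0) (hψsupp : {x : ℝ | 0 < ψ x} ⊆ Set.Ici τ)
    (t : ℝ) (ht : t ∈ Set.Ioc 0 τ) :
    DInt (fun x => φ x + ψ (x + t)) < DInt (fun x => φ x + ψ x) := by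
  obtain ⟨ht0, htτ⟩ := ht
  have hsplit₀ := DInt_add_add_four_mul_interaction hφm hψm hφ0 hψ0
    (by simpa using mul_comp_add_ae_eq_zero (s := 0) hφ0 hψ0 hφsupp hψsupp (by linarith))
  have hsplitₜ := DInt_add_add_four_mul_interaction (g := fun x => ψ (x + t)) hφm
    (by fun_prop) hφ0 (fun x => hψ0 _)
    (mul_comp_add_ae_eq_zero hφ0 hψ0 hφsupp hψsupp (by linarith))
  rw [DInt_comp_add_right] at hsplitₜ
  have hS : DInt φ + DInt ψ ≠ ⊤ := ENNReal.add_ne_top.2 ⟨hφfin.ne, hψfin.ne⟩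
  have hfin : interaction φ ψ ≠ ⊤ := fun h => hS (by simp [← hsplit₀, h])
  have hlt := interaction_lt_interaction_comp_add hφm hψm hφ0 hψ0 hφne hψne hφsupp hψsupp
    ⟨ht0, by linarith⟩ hfin
  have hAt : DInt (fun x => φ x + ψ (x + t)) ≠ ⊤ :=
    ne_top_of_le_ne_top hS (hsplitₜ ▸ le_self_add)
  refine lt_of_add_lt_add_right (a := 4 * interaction φ ψ) ?_
  calc _ < DInt (fun x => φ x + ψ (x + t)) + 4 * interaction φ (fun x => ψ (x + t)) :=
        ENNReal.add_lt_add_left hAt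
          ((ENNReal.mul_lt_mul_iff_right (by norm_num) (by norm_num)).2 hlt)
    _ = _ := hsplitₜ.trans hsplit₀.symm

/-- strict decrease of the Ḣ^{1/2} double integral when two bumps with
    supports separated by distance τ are shifted together by t ∈ (0,τ]. -/
theorem statement19 (τ : ℝ) (hτ : 0 < τ) (φ ψ : ℝ → ℝ)
    (hφm : Measurable φ) (hψm : Measurable ψ)
    (hφ0 : ∀ x, 0 ≤ φ x) (hψ0 : ∀ x, 0 ≤ ψ x)
    (hφne : ¬ φ =ᵐ[volume] (fun _ => (0:ℝ))) (hψne : ¬ ψ =ᵐ[volume] (fun _ => (0:ℝ)))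
    (hφfin : DInt φ < ⊤) (hψfin : DInt ψ < ⊤)
    (hφsupp : {x : ℝ | 0 < φ x} ⊆ Set.Iic 0) (hψsupp : {x : ℝ | 0 < ψ x} ⊆ Set.Ici τ)
    (t : ℝ) (ht : t ∈ Set.Ioc 0 τ) :
    DInt (fun x => φ x + ψ (x + t)) < DInt (fun x => φ x + ψ x) :=
  statement19_general τ φ ψ hφm hψm hφ0 hψ0 hφne hψne hφfin hψfin hφsupp hψsupp t ht
end
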